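/- arXiv:nlin/0204056 — 2 statements merged into one kernel-verified Lean document; each statement's English description precedes it below -/
import Mathlib

section
/- Let $0<\alpha<1$, $0<\beta<1$, $a>0$, $b>0$, and $\delta = \ln\alpha/\ln\beta$. Then there exist constants $0 < c_1 \le c_2$ such that for all $t \ge 1$, $c_1 t^{-\delta} \le \sum_{j=0}^\infty a\,\alpha^j e^{-b\beta^j t} \le c_2 t^{-\delta}$. -/
/-!
Write `δ = logb β α`, so that `α = β ^ δ`. For `t ≥ 1` pick `m` with `β ≤ β ^ m * t < 1`;
then `α ^ m = (β ^ m * t) ^ δ * t ^ (-δ)` lies between `α * t ^ (-δ)` and `t ^ (-δ)`, so it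
suffices to compare the series with `α ^ m`. The `m`-th term alone is at least
`a * α ^ m * exp (-b)`. The terms with `j ≥ m` are dominated by the geometric tail
`a * α ^ m / (1 - α)`. For `j < m` the exponent `b * β ^ j * t` is large, and
`exp (-x) ≤ n ! / x ^ n` with `β ^ n < α` bounds the `j`-th term by a multiple of
`α ^ j * (β ^ n) ^ (m - j)`, whose sum over `j < m` is again `O(α ^ m)`.
-/

open Real Finset
open scoped Nat

lemma exp_neg_le_factorial_div_pow {x : ℝ} (hx : 0 < x) (n : ℕ) : exp (-x) ≤ n ! / x ^ n := by
  rw [exp_neg, ← inv_div]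
  exact inv_anti₀ (by positivity) (pow_div_factorial_le_exp x hx.le n)

lemma exists_pow_mul_mem_Ico {β t : ℝ} (hβ0 : 0 < β) (hβ1 : β < 1) (ht : 1 ≤ t) :
    ∃ m : ℕ, β ≤ β ^ m * t ∧ β ^ m * t < 1 := by
  obtain ⟨m, hm, hm'⟩ := exists_nat_pow_near ht (one_lt_inv_iff₀.2 ⟨hβ0, hβ1⟩)
  rw [inv_pow, inv_le_iff_one_le_mul₀' (pow_pos hβ0 m)] at hm
  have hm'' := mul_lt_mul_of_pos_left hm' (pow_pos hβ0 (m + 1))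
  rw [← mul_pow, mul_inv_cancel₀ hβ0.ne', one_pow] at hm''
  refine ⟨m + 1, ?_, hm''⟩
  rw [pow_succ, mul_right_comm]
  exact le_mul_of_one_le_left hβ0.le hm

section Logb

variable {α β t : ℝ}

lemma pow_eq_rpow_logb_mul (hα : 0 < α) (hβ0 : 0 < β) (hβ1 : β ≠ 1) (ht : 0 < t) (m : ℕ) :
    α ^ m = (β ^ m * t) ^ logb β α * t ^ (-logb β α) := by
  rw [mul_rpow (pow_nonneg hβ0.le m) ht.le, mul_assoc, ← rpow_add ht, add_neg_cancel, rpow_zero,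
    mul_one, ← rpow_pow_comm hβ0.le, rpow_logb hβ0 hβ1 hα]

lemma mul_rpow_neg_logb_le_pow (hα0 : 0 < α) (hα1 : α ≤ 1) (hβ0 : 0 < β) (hβ1 : β < 1)
    (ht : 0 < t) {m : ℕ} (hm : β ≤ β ^ m * t) : α * t ^ (-logb β α) ≤ α ^ m := by
  rw [pow_eq_rpow_logb_mul hα0 hβ0 hβ1.ne ht]
  gcongr
  calc α = β ^ logb β α := (rpow_logb hβ0 hβ1.ne hα0).symm
    _ ≤ (β ^ m * t) ^ logb β α :=
      rpow_le_rpow hβ0.le hm (logb_nonneg_of_base_lt_one hβ0 hβ1 hα0 hα1)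

lemma pow_le_rpow_neg_logb (hα0 : 0 < α) (hα1 : α ≤ 1) (hβ0 : 0 < β) (hβ1 : β < 1)
    (ht : 0 < t) {m : ℕ} (hm : β ^ m * t ≤ 1) : α ^ m ≤ t ^ (-logb β α) := by
  rw [pow_eq_rpow_logb_mul hα0 hβ0 hβ1.ne ht]
  refine mul_le_of_le_one_left (by positivity) (rpow_le_one (by positivity) hm ?_)
  exact logb_nonneg_of_base_lt_one hβ0 hβ1 hα0 hα1

end Logb

lemma sum_range_pow_mul_pow_sub_le {x y : ℝ} (hy : 0 ≤ y) (hyx : y < x) (m : ℕ) :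
    ∑ j ∈ range m, x ^ j * y ^ (m - j) ≤ y * x ^ m / (x - y) := by
  have hshift : ∑ j ∈ range m, x ^ j * y ^ (m - j) =
      y * ∑ j ∈ range m, x ^ j * y ^ (m - 1 - j) := by
    rw [mul_sum]
    refine sum_congr rfl fun j hj ↦ ?_
    rw [show m - j = m - 1 - j + 1 by grind, pow_succ]
    ring
  rw [hshift, le_div_iff₀ (sub_pos.2 hyx), mul_assoc, geom_sum₂_mul]
  exact mul_le_mul_of_nonneg_left (sub_le_self _ (pow_nonneg hy m)) hy

noncomputable def survivalProb (a b α β t : ℝ) : ℝ :=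
  ∑' j : ℕ, a * α ^ j * exp (-b * β ^ j * t)

section Survival

variable {a b α β t : ℝ}

lemma survival_term_le_mul_pow (ha : 0 ≤ a) (hb : 0 ≤ b) (hα : 0 ≤ α) (hβ : 0 ≤ β)
    (ht : 0 ≤ t) (j : ℕ) : a * α ^ j * exp (-b * β ^ j * t) ≤ a * α ^ j := by
  refine mul_le_of_le_one_right (by positivity) (exp_le_one_iff.2 ?_)
  have : 0 ≤ b * β ^ j * t := by positivity
  linarith

lemma summable_survival_term (ha : 0 ≤ a) (hb : 0 ≤ b) (hα0 : 0 ≤ α) (hα1 : α < 1)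
    (hβ : 0 ≤ β) (ht : 0 ≤ t) : Summable fun j : ℕ ↦ a * α ^ j * exp (-b * β ^ j * t) :=
  .of_nonneg_of_le (fun j ↦ by positivity) (survival_term_le_mul_pow ha hb hα0 hβ ht)
    ((summable_geometric_of_lt_one hα0 hα1).mul_left a)

lemma pow_mul_exp_neg_le_survivalProb (ha : 0 ≤ a) (hb : 0 ≤ b) (hα0 : 0 ≤ α) (hα1 : α < 1)
    (hβ : 0 ≤ β) (ht : 0 ≤ t) {m : ℕ} (hm : β ^ m * t ≤ 1) :
    a * α ^ m * exp (-b) ≤ survivalProb a b α β t := calc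
  a * α ^ m * exp (-b) ≤ a * α ^ m * exp (-b * β ^ m * t) := by
    gcongr
    nlinarith
  _ ≤ _ := (summable_survival_term ha hb hα0 hα1 hβ ht).le_tsum m fun j _ ↦ by positivity

lemma tsum_survival_term_nat_add_le (ha : 0 ≤ a) (hb : 0 ≤ b) (hα0 : 0 ≤ α) (hα1 : α < 1)
    (hβ : 0 ≤ β) (ht : 0 ≤ t) (m : ℕ) :
    ∑' j : ℕ, a * α ^ (j + m) * exp (-b * β ^ (j + m) * t) ≤ a * (1 - α)⁻¹ * α ^ m := by
  have hgeom := summable_geometric_of_lt_one hα0 hα1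
  calc ∑' j : ℕ, a * α ^ (j + m) * exp (-b * β ^ (j + m) * t)
      ≤ ∑' j : ℕ, a * α ^ m * α ^ j := by
        refine Summable.tsum_le_tsum (fun j ↦ ?_) ?_ (hgeom.mul_left _)
        · rw [mul_assoc a (α ^ m), ← pow_add, add_comm m]
          exact survival_term_le_mul_pow ha hb hα0 hβ ht _
        · exact (summable_nat_add_iff m).2 (summable_survival_term ha hb hα0 hα1 hβ ht)
    _ = a * (1 - α)⁻¹ * α ^ m := by
        rw [tsum_mul_left, tsum_geometric_of_lt_one hα0 hα1]
        ring

lemma pow_mul_exp_neg_le_factorial_div (hb : 0 < b) (hα : 0 ≤ α) (hβ : 0 < β) (ht : 0 < t)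
    {j k : ℕ} (hjk : β ≤ β ^ (j + k) * t) (n : ℕ) :
    α ^ j * exp (-b * β ^ j * t) ≤ n ! / (b * β) ^ n * (α ^ j * (β ^ n) ^ k) := by
  have key : (b * β) ^ n ≤ (b * β ^ j * t) ^ n * (β ^ n) ^ k := calc
    (b * β) ^ n ≤ (b * (β ^ (j + k) * t)) ^ n := by gcongr
    _ = _ := by ring
  calc α ^ j * exp (-b * β ^ j * t) ≤ α ^ j * (n ! / (b * β ^ j * t) ^ n) := by
        rw [neg_mul, neg_mul]
        gcongr
        exact exp_neg_le_factorial_div_pow (by positivity) n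
    _ ≤ α ^ j * (n ! * (β ^ n) ^ k / (b * β) ^ n) := by
        gcongr ?_ * ?_
        rw [div_le_div_iff₀ (by positivity) (by positivity), mul_assoc, mul_comm ((β ^ n) ^ k)]
        gcongr
    _ = n ! / (b * β) ^ n * (α ^ j * (β ^ n) ^ k) := by ring

lemma sum_range_survival_term_le_mul_pow (ha : 0 ≤ a) (hb : 0 < b) (hα : 0 < α) (hβ : 0 < β)
    (ht : 0 < t) {n m : ℕ} (hn : β ^ n < α) (hm : β ≤ β ^ m * t) :
    ∑ j ∈ range m, a * α ^ j * exp (-b * β ^ j * t) ≤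
      a * (n ! / (b ^ n * (α - β ^ n))) * α ^ m :=
  calc ∑ j ∈ range m, a * α ^ j * exp (-b * β ^ j * t)
      ≤ ∑ j ∈ range m, a * (n ! / (b * β) ^ n) * (α ^ j * (β ^ n) ^ (m - j)) := by
        refine sum_le_sum fun j hj ↦ ?_
        rw [mul_assoc a (α ^ j), mul_assoc a]
        have hjm : β ≤ β ^ (j + (m - j)) * t := by
          rwa [Nat.add_sub_cancel' (mem_range.1 hj).le]
        exact mul_le_mul_of_nonneg_left (pow_mul_exp_neg_le_factorial_div hb hα.le hβ ht hjm n) ha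
    _ ≤ a * (n ! / (b * β) ^ n) * (β ^ n * α ^ m / (α - β ^ n)) := by
        rw [← mul_sum]
        gcongr
        exact sum_range_pow_mul_pow_sub_le (by positivity) hn m
    _ = a * (n ! / (b ^ n * (α - β ^ n))) * α ^ m := by
        have : α - β ^ n ≠ 0 := (sub_pos.2 hn).ne'
        field_simp
        ring

lemma survivalProb_le (ha : 0 ≤ a) (hb : 0 < b) (hα0 : 0 < α) (hα1 : α < 1) (hβ : 0 < β)
    (ht : 0 < t) {n m : ℕ} (hn : β ^ n < α) (hm : β ≤ β ^ m * t) :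
    survivalProb a b α β t ≤ a * ((1 - α)⁻¹ + n ! / (b ^ n * (α - β ^ n))) * α ^ m := by
  have hsum := summable_survival_term ha hb.le hα0.le hα1 hβ.le ht.le
  rw [survivalProb, ← hsum.sum_add_tsum_nat_add m]
  linarith [sum_range_survival_term_le_mul_pow ha hb hα0 hβ ht hn hm,
    tsum_survival_term_nat_add_le ha hb.le hα0.le hα1 hβ.le ht.le m]

end Survival

theorem stmt_2 (a b α β : ℝ) (ha : 0 < a) (hb : 0 < b)
    (hα0 : 0 < α) (hα1 : α < 1) (hβ0 : 0 < β) (hβ1 : β < 1)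
    (δ : ℝ) (hδ : δ = Real.log α / Real.log β) :
    ∃ c₁ c₂ : ℝ, 0 < c₁ ∧ c₁ ≤ c₂ ∧ ∀ t : ℝ, 1 ≤ t →
      c₁ * t ^ (-δ) ≤ (∑' j : ℕ, a * α ^ j * Real.exp (-b * β ^ j * t)) ∧
      (∑' j : ℕ, a * α ^ j * Real.exp (-b * β ^ j * t)) ≤ c₂ * t ^ (-δ) := by
  rw [log_div_log] at hδ
  subst hδ
  obtain ⟨n, hn⟩ := exists_pow_lt_of_lt_one hα0 hβ1
  have bounds : ∀ t : ℝ, 1 ≤ t →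
      a * α * exp (-b) * t ^ (-logb β α) ≤ survivalProb a b α β t ∧
      survivalProb a b α β t ≤
        a * ((1 - α)⁻¹ + n ! / (b ^ n * (α - β ^ n))) * t ^ (-logb β α) := by
    intro t ht
    have ht0 : 0 < t := by linarith
    obtain ⟨m, hm, hm'⟩ := exists_pow_mul_mem_Ico hβ0 hβ1 ht
    constructor
    · calc a * α * exp (-b) * t ^ (-logb β α)
          = a * (α * t ^ (-logb β α)) * exp (-b) := by ring
        _ ≤ a * α ^ m * exp (-b) := by
          gcongr
          exact mul_rpow_neg_logb_le_pow hα0 hα1.le hβ0 hβ1 ht0 hm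
        _ ≤ survivalProb a b α β t :=
          pow_mul_exp_neg_le_survivalProb ha.le hb.le hα0.le hα1 hβ0.le ht0.le hm'.le
    · refine (survivalProb_le ha.le hb hα0 hα1 hβ0 ht0 hn hm).trans ?_
      gcongr
      exact pow_le_rpow_neg_logb hα0 hα1.le hβ0 hβ1 ht0 hm'.le
  refine ⟨_, _, by positivity, ?_, bounds⟩
  simpa using (bounds 1 le_rfl).1.trans (bounds 1 le_rfl).2
end

section
/- Let $W_T(n) = [q_nq_{n+1}]^{T/(2\mu^n)}$ with $q_n = 1 - p_0\varepsilon^n$, $0 < \varepsilon < \mu < 1$, $0<p_0\le 1$, $T>0$. Then for all sufficiently large $n$, $W_T(n) > W_T(n-1)$; i.e., the probability of bouncing on bond $n$ for time $T$ is increasing in $n$. -/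
/-!
With `a n = -log (q n)` one has `W n = exp (-T (a n + a (n+1)) / (2 μ^n))`, so `W (n-1) < W n`
follows from `a (n+1) < μ a n` for all large `n`. Since `x ≤ -log (1 - x) ≤ x / (1 - x)`, the
sequence `a n` behaves like `p0 ε^n`, and the ratio `ε < μ` leaves room for that inequality once
`p0 ε^n` is small.
-/

open Real Filter Topology

lemma neg_log_one_sub_le_div {x : ℝ} (hx : x < 1) : -log (1 - x) ≤ x / (1 - x) := by
  have h := one_sub_inv_le_log_of_pos (sub_pos.2 hx)
  have : (1 - x)⁻¹ - 1 = x / (1 - x) := by field_simp [(sub_pos.2 hx).ne']; ring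
  linarith

lemma le_neg_log_one_sub {x : ℝ} (hx : x < 1) : x ≤ -log (1 - x) := by
  linarith [log_le_sub_one_of_pos (sub_pos.2 hx)]

lemma neg_log_one_sub_mul_lt {ε μ y : ℝ} (hμ : 0 < μ) (hy0 : 0 < y) (hy1 : y < 1)
    (hsmall : ε * y < 1 - ε / μ) : -log (1 - ε * y) < μ * -log (1 - y) := by
  have hεμ : ε < μ * (1 - ε * y) := by
    rw [lt_sub_iff_add_lt, ← lt_sub_iff_add_lt', div_lt_iff₀ hμ] at hsmall
    linarith
  have hεy : ε * y < 1 := by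
    by_contra! h
    nlinarith [mul_nonneg hμ.le (sub_nonneg.2 h)]
  calc -log (1 - ε * y) ≤ ε * y / (1 - ε * y) := neg_log_one_sub_le_div hεy
    _ < μ * y := by
      rw [div_lt_iff₀ (sub_pos.2 hεy)]
      nlinarith
    _ ≤ μ * -log (1 - y) := mul_le_mul_of_nonneg_left (le_neg_log_one_sub hy1) hμ.le

lemma eventually_neg_log_one_sub_mul_lt {ε μ : ℝ} (hμ : 0 < μ) (hεμ : ε < μ) :
    ∀ᶠ y in 𝓝[>] 0, y < 1 ∧ -log (1 - ε * y) < μ * -log (1 - y) := by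
  have hsmall : ∀ᶠ y in 𝓝 (0 : ℝ), ε * y < 1 - ε / μ := by
    refine (continuous_const_mul ε).continuousAt.eventually_lt continuousAt_const ?_
    rw [mul_zero, sub_pos, div_lt_one hμ]
    exact hεμ
  filter_upwards [self_mem_nhdsWithin, nhdsWithin_le_nhds (gt_mem_nhds zero_lt_one),
    nhdsWithin_le_nhds hsmall] with y hy0 hy1 hy
  exact ⟨hy1, neg_log_one_sub_mul_lt hμ hy0 hy1 hy⟩

lemma tendsto_const_mul_pow_nhdsWithin_zero {c ε : ℝ} (hc : 0 < c) (hε0 : 0 < ε) (hε1 : ε < 1) :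
    Tendsto (fun n : ℕ ↦ c * ε ^ n) atTop (𝓝[>] 0) := by
  refine tendsto_nhdsWithin_iff.2 ⟨?_, Eventually.of_forall fun n ↦ Set.mem_Ioi.2 (by positivity)⟩
  simpa using (tendsto_pow_atTop_nhds_zero_of_lt_one hε0.le hε1).const_mul c

lemma eventually_neg_log_one_sub_const_mul_pow_succ_lt {c ε μ : ℝ} (hc : 0 < c) (hε0 : 0 < ε)
    (hε1 : ε < 1) (hμ : 0 < μ) (hεμ : ε < μ) :
    ∀ᶠ n : ℕ in atTop, 0 < 1 - c * ε ^ n ∧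
      -log (1 - c * ε ^ (n + 1)) < μ * -log (1 - c * ε ^ n) := by
  filter_upwards [(tendsto_const_mul_pow_nhdsWithin_zero hc hε0 hε1).eventually
    (eventually_neg_log_one_sub_mul_lt hμ hεμ)] with n ⟨hn1, hn⟩
  rw [pow_succ, mul_comm _ ε, ← mul_assoc, mul_comm c ε, mul_assoc]
  exact ⟨sub_pos.2 hn1, hn⟩

lemma rpow_mul_lt_rpow {b b' c μ : ℝ} (hb : 0 < b) (hb' : 0 < b') (hc : 0 < c)
    (h : μ * log b < log b') : b ^ (μ * c) < b' ^ c := by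
  rw [rpow_def_of_pos hb, rpow_def_of_pos hb', exp_lt_exp]
  nlinarith

theorem stmt_9_general (p0 ε μ T : ℝ) (hp0 : 0 < p0)
    (hε0 : 0 < ε) (hεμ : ε < μ) (hμ1 : μ < 1) (hT : 0 < T)
    (q : ℕ → ℝ) (hq : ∀ n, q n = 1 - p0 * ε ^ n)
    (W : ℕ → ℝ) (hW : ∀ n, W n = (q n * q (n + 1)) ^ (T / (2 * μ ^ n))) :
    ∃ N : ℕ, 1 ≤ N ∧ ∀ n : ℕ, N ≤ n → W (n - 1) < W n := by
  have hμ0 : 0 < μ := hε0.trans hεμ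
  have hstep : ∀ᶠ n in atTop, 0 < q n ∧ -log (q (n + 1)) < μ * -log (q n) := by
    simpa only [hq] using
      eventually_neg_log_one_sub_const_mul_pow_succ_lt hp0 hε0 (hεμ.trans hμ1) hμ0 hεμ
  have hmono : ∀ᶠ n in atTop, W n < W (n + 1) := by
    filter_upwards [hstep, (tendsto_add_atTop_nat 1).eventually hstep,
      (tendsto_add_atTop_nat 2).eventually hstep] with n ⟨hq0, h0⟩ ⟨hq1, h1⟩ ⟨hq2, _⟩
    have hexp : T / (2 * μ ^ n) = μ * (T / (2 * μ ^ (n + 1))) := by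
      rw [pow_succ]; field_simp
    rw [hW, hW, hexp]
    refine rpow_mul_lt_rpow (by positivity) (by positivity) (by positivity) ?_
    rw [log_mul hq0.ne' hq1.ne', log_mul hq1.ne' hq2.ne']
    linarith
  obtain ⟨N, hN⟩ := eventually_atTop.1 hmono
  refine ⟨N + 1, le_add_self, fun n hn ↦ ?_⟩
  obtain ⟨m, rfl⟩ := Nat.exists_eq_add_of_le' (le_of_add_le_right hn)
  simpa using hN m (by omega)

theorem stmt_9 (p0 ε μ T : ℝ) (hp0 : 0 < p0) (hp1 : p0 ≤ 1)
    (hε0 : 0 < ε) (hεμ : ε < μ) (hμ1 : μ < 1) (hT : 0 < T)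
    (q : ℕ → ℝ) (hq : ∀ n, q n = 1 - p0 * ε ^ n)
    (W : ℕ → ℝ) (hW : ∀ n, W n = (q n * q (n + 1)) ^ (T / (2 * μ ^ n))) :
    ∃ N : ℕ, 1 ≤ N ∧ ∀ n : ℕ, N ≤ n → W (n - 1) < W n :=
  stmt_9_general p0 ε μ T hp0 hε0 hεμ hμ1 hT q hq W hW
end
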